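/- arXiv:1912.05655 — 4 statements merged into one kernel-verified Lean document; each statement's English description precedes it below -/
import Mathlib

section
/- For integers M ≥ 1, a discriminant Δ, and a positive divisor t of M, the map Q = [a,b,c] ↦ Q_t := [a t^2, b t, c] yields a bijection from Q_{M/t}(Δ) onto Q_{Mt}(Δ t^2). -/
/-- `QM M Δ` is the set of integral binary quadratic forms `[a,b,c]` of
discriminant `Δ` with `M ∣ a`. -/
def QM (M Δ : ℤ) : Set (ℤ × ℤ × ℤ) :=
  {q | q.2.1^2 - 4 * q.1 * q.2.2 = Δ ∧ M ∣ q.1}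

/-!
Scaling `[a,b,c] ↦ [a t², b t, c]` multiplies the discriminant by `t²` and turns the level `N`
into `N t²`, and it is injective for `t ≠ 0`. Conversely, if `t² ∣ A` and `B² - 4AC = Δ t²`,
then `t² ∣ B²`, so `t ∣ B` and `[A,B,C]` is the scaling of `[A/t², B/t, C]`. With `N = M/t`
the level `N t²` is `M t`.
-/

namespace QM

def scale (t : ℤ) (q : ℤ × ℤ × ℤ) : ℤ × ℤ × ℤ := (q.1 * t ^ 2, q.2.1 * t, q.2.2)

theorem scale_injective {t : ℤ} (ht : t ≠ 0) : Function.Injective (scale t) := by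
  rintro ⟨a, b, c⟩ ⟨a', b', c'⟩ h
  simp only [scale, Prod.mk.injEq] at h
  obtain ⟨ha, hb, rfl⟩ := h
  rw [mul_right_cancel₀ (pow_ne_zero 2 ht) ha, mul_right_cancel₀ ht hb]

theorem mapsTo_scale (N Δ t : ℤ) :
    Set.MapsTo (scale t) (QM N Δ) (QM (N * t ^ 2) (Δ * t ^ 2)) := by
  rintro ⟨a, b, c⟩ ⟨hdisc, hNa⟩
  refine ⟨?_, mul_dvd_mul_right hNa _⟩
  simp only [scale] at hdisc ⊢
  rw [← hdisc]
  ring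

theorem dvd_of_sq_dvd_of_disc_eq {t A B C Δ : ℤ} (hA : t ^ 2 ∣ A)
    (hdisc : B ^ 2 - 4 * A * C = Δ * t ^ 2) : t ∣ B := by
  have hB : B ^ 2 = Δ * t ^ 2 + 4 * A * C := by linarith
  have : t ^ 2 ∣ B ^ 2 := hB ▸ dvd_add (dvd_mul_left _ _) ((hA.mul_left 4).mul_right C)
  exact (Int.pow_dvd_pow_iff two_ne_zero).mp this

theorem surjOn_scale (N Δ : ℤ) {t : ℤ} (ht : t ≠ 0) :
    Set.SurjOn (scale t) (QM N Δ) (QM (N * t ^ 2) (Δ * t ^ 2)) := by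
  rintro ⟨A, B, C⟩ ⟨hdisc, hNA⟩
  obtain ⟨b, rfl⟩ := dvd_of_sq_dvd_of_disc_eq (dvd_trans (dvd_mul_left _ _) hNA) hdisc
  obtain ⟨k, rfl⟩ := hNA
  refine ⟨(N * k, b, C), ⟨?_, dvd_mul_right N k⟩, ?_⟩
  · apply mul_right_cancel₀ (pow_ne_zero 2 ht)
    dsimp only at hdisc ⊢
    rw [← hdisc]
    ring
  · simp only [scale, Prod.mk.injEq]
    exact ⟨by ring, by ring, trivial⟩

theorem bijOn_scale (N Δ : ℤ) {t : ℤ} (ht : t ≠ 0) :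
    Set.BijOn (scale t) (QM N Δ) (QM (N * t ^ 2) (Δ * t ^ 2)) :=
  ⟨mapsTo_scale N Δ t, (scale_injective ht).injOn, surjOn_scale N Δ ht⟩

end QM

theorem stmt1_general (M t Δ : ℤ) (ht : 0 < t) (htM : t ∣ M) :
    Set.BijOn (fun q : ℤ × ℤ × ℤ => (q.1 * t^2, q.2.1 * t, q.2.2))
      (QM (M / t) Δ) (QM (M * t) (Δ * t^2)) := by
  have hlevel : M / t * t ^ 2 = M * t := by
    rw [sq, ← mul_assoc, Int.ediv_mul_cancel htM]
  rw [← hlevel]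
  exact QM.bijOn_scale (M / t) Δ ht.ne'

/-- For `M ≥ 1`, a discriminant `Δ` and a positive divisor `t` of `M`, the map
`[a,b,c] ↦ [a t², b t, c]` is a bijection from `Q_{M/t}(Δ)` onto `Q_{Mt}(Δ t²)`. -/
theorem stmt1 (M t Δ : ℤ) (hM : 1 ≤ M) (ht : 0 < t) (htM : t ∣ M) :
    Set.BijOn (fun q : ℤ × ℤ × ℤ => (q.1 * t^2, q.2.1 * t, q.2.2))
      (QM (M / t) Δ) (QM (M * t) (Δ * t^2)) :=
  stmt1_general M t Δ ht htM
end

section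
/- Fix M ≥ 1 and a discriminant Δ, and let ϱ ∈ Z/2MZ satisfy ϱ^2 ≡ Δ (mod 4M). Then for every Γ_0(M)-primitive form Q = [aM, b, c] of discriminant Δ with b ≡ ϱ (mod 2M) and gcd(a,b,c) = 1, one has gcd(M, b, ac) = gcd(M, ϱ, (R^2 − Δ)/(4M)) where R is any integer representing ϱ. In particular the quantity m_ϱ := gcd(M, ϱ, (ϱ^2 − Δ)/(4M)) is well-defined (independent of the lift of ϱ modulo 2M) and equals gcd(M, b, ac) for any such form. -/
/-!
Shifting the lift `R` of `ϱ` by `2Mk` changes `(R² − Δ)/(4M)` by `kR + Mk²`, a combination of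
`M` and `R`, so the common divisors of `M`, `R` and `(R² − Δ)/(4M)` do not depend on the lift.
For the form `[aM, b, c]` the discriminant identity gives `(b² − Δ)/(4M) = ac`, and `b` is itself
a lift of `ϱ`.
-/

theorem Int.gcd_gcd_add_two_mul_mul_eq (M R X k : ℤ) :
    Int.gcd (Int.gcd M (R + 2 * M * k) : ℤ) (X + k * R + M * k ^ 2) =
      Int.gcd (Int.gcd M R : ℤ) X := by
  have hM : Int.gcd M (R + 2 * M * k) = Int.gcd M R := by
    rw [show R + 2 * M * k = R + (2 * k) * M by ring, Int.gcd_add_mul_right_right]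
  rw [hM]
  set g : ℤ := (Int.gcd M R : ℤ)
  obtain ⟨m, hm⟩ : g ∣ M := Int.gcd_dvd_left _ _
  obtain ⟨r, hr⟩ : g ∣ R := Int.gcd_dvd_right _ _
  rw [show X + k * R + M * k ^ 2 = X + (k * r + m * k ^ 2) * g by rw [hm, hr]; ring,
    Int.gcd_add_mul_right_right]

theorem Int.gcd_gcd_sq_sub_div_eq {M Δ R R' : ℤ} (hM : M ≠ 0) (hR : 4 * M ∣ R ^ 2 - Δ)
    (hRR' : 2 * M ∣ R - R') :
    Int.gcd (Int.gcd M R : ℤ) ((R ^ 2 - Δ) / (4 * M)) =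
      Int.gcd (Int.gcd M R' : ℤ) ((R' ^ 2 - Δ) / (4 * M)) := by
  obtain ⟨X, hX⟩ := hR
  obtain ⟨k, hk⟩ := hRR'
  have hR' : R' = R + 2 * M * (-k) := by linear_combination -hk
  have hX' : R' ^ 2 - Δ = 4 * M * (X + (-k) * R + M * (-k) ^ 2) := by
    rw [hR']; linear_combination hX
  have h4M : 4 * M ≠ 0 := mul_ne_zero four_ne_zero hM
  rw [hX, hX', Int.mul_ediv_cancel_left _ h4M, Int.mul_ediv_cancel_left _ h4M, hR',
    Int.gcd_gcd_add_two_mul_mul_eq]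

theorem stmt7_general (M Δ R R' a b c : ℤ) (hM : 1 ≤ M)
    (hcong : (2 * M) ∣ (R - R'))
    (hdisc : b^2 - 4 * (a * M) * c = Δ) (hb : (2 * M) ∣ (b - R)) :
    Int.gcd (Int.gcd M b : ℤ) (a * c) = Int.gcd (Int.gcd M R : ℤ) ((R^2 - Δ) / (4 * M)) ∧
    Int.gcd (Int.gcd M R : ℤ) ((R^2 - Δ) / (4 * M))
      = Int.gcd (Int.gcd M R' : ℤ) ((R'^2 - Δ) / (4 * M)) := by
  have hM0 : M ≠ 0 := by omega
  have hbΔ : b ^ 2 - Δ = 4 * M * (a * c) := by linear_combination hdisc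
  have hac : (b ^ 2 - Δ) / (4 * M) = a * c := by
    rw [hbΔ, Int.mul_ediv_cancel_left _ (mul_ne_zero four_ne_zero hM0)]
  have lift_eq := fun {S : ℤ} (hS : 2 * M ∣ b - S) =>
    Int.gcd_gcd_sq_sub_div_eq hM0 ⟨a * c, hbΔ⟩ hS
  have hbR' : 2 * M ∣ b - R' := by simpa using dvd_add hb hcong
  exact ⟨hac ▸ lift_eq hb, (lift_eq hb).symm.trans (lift_eq hbR')⟩

/-- For `Q = [aM, b, c]` of discriminant `Δ` with `b ≡ ϱ (mod 2M)` and
`gcd(a,b,c) = 1`, one has `gcd(M, b, ac) = gcd(M, R, (R² − Δ)/(4M))` for any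
integer `R` lifting `ϱ`; in particular the invariant
`m_ϱ = gcd(M, ϱ, (ϱ² − Δ)/(4M))` is independent of the chosen lift of `ϱ`
modulo `2M` and equals `gcd(M, b, ac)` for any such form. -/
theorem stmt7 (M Δ R R' a b c : ℤ) (hM : 1 ≤ M)
    (hR : (4 * M) ∣ (R^2 - Δ)) (hR' : (4 * M) ∣ (R'^2 - Δ))
    (hcong : (2 * M) ∣ (R - R'))
    (hdisc : b^2 - 4 * (a * M) * c = Δ) (hb : (2 * M) ∣ (b - R))
    (hprim : Int.gcd (Int.gcd a b : ℤ) c = 1) :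
    Int.gcd (Int.gcd M b : ℤ) (a * c) = Int.gcd (Int.gcd M R : ℤ) ((R^2 - Δ) / (4 * M)) ∧
    Int.gcd (Int.gcd M R : ℤ) ((R^2 - Δ) / (4 * M))
      = Int.gcd (Int.gcd M R' : ℤ) ((R'^2 - Δ) / (4 * M)) :=
  stmt7_general M Δ R R' a b c hM hcong hdisc hb
end

section
/- Let N ≥ 1, p an odd prime with p ∤ N, and Δ a discriminant with p | Δ. Let ϱ' ∈ R_{Np}(Δ) and ϱ ∈ R_N(Δ) its image under reduction, represented by a common integer R. Then: (i) if p^2 ∤ Δ, then gcd(Np, R, (R^2−Δ)/(4Np)) = gcd(N, R, (R^2−Δ)/(4N)); (ii) if p^2 | Δ, then gcd(Np, R, (R^2−Δ)/(4Np)) = p · gcd(N, R, (R^2−Δ)/(4N)). -/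
/-!
Write `R² − Δ = 4Np·q`; then `p ∣ R`, since `p` divides `Δ` and `R² − Δ`. As `p ∤ N`,
the factor `p` splits off both gcds: `gcd(Np, R, q) = gcd(N, R, pq) · gcd(p, q)`.
Since `p² ∣ R²`, `p² ∣ Δ` is equivalent to `p² ∣ 4Np·q`, i.e. (as `p ∤ 4N`) to `p ∣ q`;
so `gcd(p, q)` is `p` or `1` according to whether `p² ∣ Δ`.
-/

theorem Nat.gcd_gcd_mul_eq_mul_gcd {n p r : ℕ} (q : ℕ) (hnp : n.Coprime p) (hpr : p ∣ r) :
    gcd (gcd (n * p) r) q = gcd (gcd n r) (p * q) * gcd p q := by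
  have hg : (gcd n r).Coprime p := hnp.coprime_dvd_left (gcd_dvd_left n r)
  calc gcd (gcd (n * p) r) q = gcd (gcd n r * p) q := by
        rw [gcd_comm (n * p), hnp.gcd_mul r, gcd_eq_right hpr, gcd_comm r]
    _ = gcd (gcd n r) q * gcd p q := by
        rw [gcd_comm, hg.gcd_mul q, gcd_comm q, gcd_comm q]
    _ = gcd (gcd n r) (p * q) * gcd p q := by
        rw [hg.symm.gcd_mul_left_cancel_right]

theorem Int.gcd_gcd_mul_eq_mul_gcd {N p R : ℤ} (q : ℤ) (hNp : Int.gcd N p = 1) (hpR : p ∣ R) :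
    Int.gcd (Int.gcd (N * p) R : ℤ) q = Int.gcd (Int.gcd N R : ℤ) (p * q) * Int.gcd p q := by
  rw [Int.gcd_eq_natAbs] at hNp
  simp only [Int.gcd_eq_natAbs, Int.natAbs_mul, Int.natAbs_natCast]
  exact Nat.gcd_gcd_mul_eq_mul_gcd _ hNp (Int.natAbs_dvd_natAbs.mpr hpR)

theorem Prime.sq_dvd_iff_dvd_of_sq_sub_eq {α : Type*} [CommRing α] [IsDomain α] {p R Δ c q : α}
    (hp : Prime p) (hpc : ¬ p ∣ c) (hpR : p ∣ R) (h : R ^ 2 - Δ = c * p * q) :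
    p ^ 2 ∣ Δ ↔ p ∣ q := by
  rw [← dvd_sub_right (pow_dvd_pow_of_dvd hpR 2), h, show c * p * q = p * (c * q) by ring, sq,
    mul_dvd_mul_iff_left hp.ne_zero]
  exact ⟨fun hcq => (hp.dvd_or_dvd hcq).resolve_left hpc, fun hq => dvd_mul_of_dvd_right hq c⟩

theorem Nat.Prime.not_dvd_four_of_odd {p : ℕ} (hp : p.Prime) (hodd : Odd p) : ¬ p ∣ 4 :=
  fun h => hp.one_lt.ne' ((Nat.coprime_two_right.mpr hodd).pow_right 2 |>.eq_one_of_dvd h)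

/-- Comparison of the invariants `m_ϱ'` and `m_ϱ` at levels `Np` and `N`:
for `p` an odd prime, `p ∤ N`, `p ∣ Δ`, and `R` an integer with
`R² ≡ Δ (mod 4Np)`: (i) if `p² ∤ Δ` then
`gcd(Np, R, (R²−Δ)/(4Np)) = gcd(N, R, (R²−Δ)/(4N))`; (ii) if `p² ∣ Δ` then
`gcd(Np, R, (R²−Δ)/(4Np)) = p · gcd(N, R, (R²−Δ)/(4N))`. -/
theorem stmt11 (N Δ R : ℤ) (p : ℕ) (hN : 1 ≤ N) (hp : p.Prime) (hodd : Odd p)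
    (hpN : ¬ (p : ℤ) ∣ N) (hpΔ : (p : ℤ) ∣ Δ)
    (hR : (4 * (N * (p : ℤ))) ∣ (R^2 - Δ)) :
    (¬ ((p : ℤ)^2 ∣ Δ) →
      Int.gcd (Int.gcd (N * (p : ℤ)) R : ℤ) ((R^2 - Δ) / (4 * (N * (p : ℤ))))
        = Int.gcd (Int.gcd N R : ℤ) ((R^2 - Δ) / (4 * N))) ∧
    (((p : ℤ)^2 ∣ Δ) →
      Int.gcd (Int.gcd (N * (p : ℤ)) R : ℤ) ((R^2 - Δ) / (4 * (N * (p : ℤ))))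
        = p * Int.gcd (Int.gcd N R : ℤ) ((R^2 - Δ) / (4 * N))) := by
  obtain ⟨q, hq⟩ := hR
  have hp' : Prime (p : ℤ) := Nat.prime_iff_prime_int.mp hp
  have hN0 : N ≠ 0 := by omega
  rw [hq, Int.mul_ediv_cancel_left _ (by simp [hN0, hp.ne_zero]),
    show 4 * (N * p) * q = 4 * N * (p * q) by ring, Int.mul_ediv_cancel_left _ (by simp [hN0])]
  have hpR : (p : ℤ) ∣ R :=
    hp'.dvd_of_dvd_pow (n := 2) ((dvd_sub_left hpΔ).mp ⟨4 * N * q, by rw [hq]; ring⟩)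
  have hp4N : ¬ (p : ℤ) ∣ 4 * N := fun h => (hp'.dvd_or_dvd h).elim
    (fun h4 => hp.not_dvd_four_of_odd hodd (by exact_mod_cast h4)) hpN
  have hsq : (p : ℤ) ^ 2 ∣ Δ ↔ (p : ℤ) ∣ q :=
    hp'.sq_dvd_iff_dvd_of_sq_sub_eq hp4N hpR (by rw [hq]; ring)
  have hNp : Int.gcd N p = 1 := (hp.coprime_iff_not_dvd.mpr (Int.natCast_dvd.not.mp hpN)).symm
  rw [Int.gcd_gcd_mul_eq_mul_gcd q hNp hpR]
  constructor
  · intro hΔ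
    have hpq : Int.gcd p q = 1 := hp.coprime_iff_not_dvd.mpr (Int.natCast_dvd.not.mp (hsq.not.mp hΔ))
    rw [hpq, mul_one]
  · intro hΔ
    have hpq : Int.gcd p q = p := Nat.gcd_eq_left (Int.natCast_dvd.mp (hsq.mp hΔ))
    rw [hpq, mul_comm]
end

section
/- Let N, N_0, Δ, p be as follows: N ≥ 1 with N_0 | N, p an odd prime with p ∤ N, p | Δ and p^2 ∤ Δ. Then the map [aNp, b, c] ↦ [(ap)N, b, c] (the identity on forms) induces a bijection L_{Np}(N_0^2 Δ)/Γ_0(Np) → L_N(N_0^2 Δ)/Γ_0(N), where L_M(D) denotes the set of forms [A, b, c] of discriminant D with M | A and gcd(N_0, c) = 1. -/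
/-- Action of a 2×2 integer matrix on an integral binary quadratic form
`(A, b, c)`, given by `(Q∘γ)(X,Y) = Q((X,Y)·γᵀ)`. -/
def actQ (g : Matrix (Fin 2) (Fin 2) ℤ) (q : ℤ × ℤ × ℤ) : ℤ × ℤ × ℤ :=
  (q.1 * (g 0 0)^2 + q.2.1 * (g 0 0) * (g 1 0) + q.2.2 * (g 1 0)^2,
   2*q.1*(g 0 0)*(g 0 1) + q.2.1*((g 0 0)*(g 1 1) + (g 0 1)*(g 1 0)) + 2*q.2.2*(g 1 0)*(g 1 1),
   q.1 * (g 0 1)^2 + q.2.1 * (g 0 1) * (g 1 1) + q.2.2 * (g 1 1)^2)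

/-- `Lset N₀ M D` is the set of forms `[A, b, c]` of discriminant `D` with
`M ∣ A` and `gcd(N₀, c) = 1`. -/
def Lset (N₀ M D : ℤ) : Set (ℤ × ℤ × ℤ) :=
  {q | q.2.1^2 - 4 * q.1 * q.2.2 = D ∧ M ∣ q.1 ∧ IsCoprime N₀ q.2.2}

/-- `Γ₀(M)`-equivalence of integral binary quadratic forms. -/
def relQ (M : ℤ) (q q' : ℤ × ℤ × ℤ) : Prop :=
  ∃ g : Matrix (Fin 2) (Fin 2) ℤ, g.det = 1 ∧ M ∣ g 1 0 ∧ actQ g q = q'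

/-!
Write `D = N₀²Δ`, so that `p` exactly divides `D`. For a form `[A, b, c]` of discriminant `D`
with `p ∣ A`, the relation `b² = D + 4Ac` forces `p ∣ b` and then `p ∤ c`. Hence if
`g = (α β; γ δ) ∈ Γ₀(N)` carries such a form to another one with `p ∣ A'`, reducing
`A' = Aα² + bαγ + cγ²` mod `p` gives `p ∣ γ`, so `g ∈ Γ₀(Np)`: this is injectivity.
For surjectivity, a form with `p ∤ c` is moved by `(1 0; kN 1)`, which fixes `c`, to one with
`p ∣ A'`, because `4cA' = (2ckN + b)² - D`; a form with `p ∣ c` (and `p ∤ A`) is first moved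
by `(1 N₀; 0 1)`, which preserves `c` mod `N₀` and makes it prime to `p`.
-/

lemma actQ_one (q : ℤ × ℤ × ℤ) : actQ 1 q = q := by
  simp [actQ]

lemma actQ_mul (g h : Matrix (Fin 2) (Fin 2) ℤ) (q : ℤ × ℤ × ℤ) :
    actQ (g * h) q = actQ h (actQ g q) := by
  simp only [actQ, Matrix.mul_apply, Fin.sum_univ_two, Prod.mk.injEq]
  refine ⟨by ring, by ring, by ring⟩

lemma disc_actQ (g : Matrix (Fin 2) (Fin 2) ℤ) (q : ℤ × ℤ × ℤ) :
    (actQ g q).2.1^2 - 4*(actQ g q).1*(actQ g q).2.2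
      = g.det^2 * (q.2.1^2 - 4*q.1*q.2.2) := by
  simp only [actQ, Matrix.det_fin_two]
  ring

lemma actQ_upper (t : ℤ) (q : ℤ × ℤ × ℤ) :
    actQ !![1, t; 0, 1] q = (q.1, 2*q.1*t + q.2.1, q.1*t^2 + q.2.1*t + q.2.2) := by
  simp only [actQ, Prod.mk.injEq]
  norm_num

lemma actQ_lower (s : ℤ) (q : ℤ × ℤ × ℤ) :
    actQ !![1, 0; s, 1] q = (q.1 + q.2.1*s + q.2.2*s^2, q.2.1 + 2*q.2.2*s, q.2.2) := by
  simp only [actQ, Prod.mk.injEq]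
  norm_num

section relQ

variable {M : ℤ} {q q' q'' : ℤ × ℤ × ℤ}

lemma relQ_refl (M : ℤ) (q : ℤ × ℤ × ℤ) : relQ M q q :=
  ⟨1, Matrix.det_one, by simp, actQ_one q⟩

lemma relQ_symm (h : relQ M q q') : relQ M q' q := by
  obtain ⟨g, hdet, hM, rfl⟩ := h
  refine ⟨g.adjugate, by simp [Matrix.det_adjugate, hdet],
    by simpa [Matrix.adjugate_fin_two], ?_⟩
  rw [← actQ_mul, Matrix.mul_adjugate, hdet, one_smul, actQ_one]

lemma relQ_trans (h : relQ M q q') (h' : relQ M q' q'') : relQ M q q'' := by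
  obtain ⟨g, hdet, hM, rfl⟩ := h
  obtain ⟨g', hdet', hM', rfl⟩ := h'
  refine ⟨g * g', by rw [Matrix.det_mul, hdet, hdet', one_mul], ?_, actQ_mul g g' q⟩
  simp only [Matrix.mul_apply, Fin.sum_univ_two]
  exact dvd_add (hM.mul_right _) (hM'.mul_left _)

lemma relQ_of_dvd {M' : ℤ} (hM : M ∣ M') (h : relQ M' q q') : relQ M q q' := by
  obtain ⟨g, hdet, hM', hg⟩ := h
  exact ⟨g, hdet, hM.trans hM', hg⟩

end relQ

section PrimeDivisor

variable {p D A b c : ℤ}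

lemma dvd_of_disc_eq (hp : Prime p) (hdisc : b^2 - 4*A*c = D) (hpD : p ∣ D)
    (hpAc : p ∣ A * c) : p ∣ b := by
  refine hp.dvd_of_dvd_pow (n := 2) ?_
  rw [show b^2 = D + 4 * (A * c) by rw [← hdisc]; ring]
  exact dvd_add hpD (hpAc.mul_left 4)

lemma not_dvd_thd_of_disc_eq (hp : Prime p) (hdisc : b^2 - 4*A*c = D) (hpD : p ∣ D)
    (hp2D : ¬ p^2 ∣ D) (hpA : p ∣ A) : ¬ p ∣ c := by
  intro hpc
  have hpb := dvd_of_disc_eq hp hdisc hpD (hpA.mul_right c)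
  have hp2Ac : p^2 ∣ 4*A*c := by
    rw [sq, mul_assoc]
    exact (mul_dvd_mul hpA hpc).mul_left 4
  exact hp2D (hdisc ▸ dvd_sub (pow_dvd_pow_of_dvd hpb 2) hp2Ac)

end PrimeDivisor

lemma relQ_mul_of_relQ {M p D : ℤ} {q q' : ℤ × ℤ × ℤ} (hp : Prime p) (hpM : ¬ p ∣ M)
    (hpD : p ∣ D) (hp2D : ¬ p^2 ∣ D) (hdisc : q.2.1^2 - 4*q.1*q.2.2 = D)
    (hpA : p ∣ q.1) (hpA' : p ∣ q'.1) (h : relQ M q q') : relQ (M * p) q q' := by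
  obtain ⟨g, hdet, hM, rfl⟩ := h
  have hpb := dvd_of_disc_eq hp hdisc hpD (hpA.mul_right _)
  have hpc := not_dvd_thd_of_disc_eq hp hdisc hpD hp2D hpA
  have hpcγ : p ∣ q.2.2 * (g 1 0)^2 := by
    have hA' : q.2.2 * (g 1 0)^2
        = (actQ g q).1 - q.1 * (g 0 0)^2 - q.2.1 * (g 0 0) * (g 1 0) := by
      simp only [actQ]
      ring
    rw [hA']
    exact dvd_sub (dvd_sub hpA' (hpA.mul_right _)) ((hpb.mul_right _).mul_right _)
  have hpγ : p ∣ g 1 0 := hp.dvd_of_dvd_pow ((hp.dvd_mul.1 hpcγ).resolve_left hpc)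
  have hMp : IsCoprime M p := (hp.irreducible.coprime_iff_not_dvd.2 hpM).symm
  exact ⟨g, hdet, hMp.mul_dvd hM hpγ, rfl⟩

lemma exists_relQ_not_dvd_thd {N₀ M D p : ℤ} {q : ℤ × ℤ × ℤ} (hq : q ∈ Lset N₀ M D)
    (hp : Prime p) (hpD : p ∣ D) (hpN₀ : ¬ p ∣ N₀) (hpA : ¬ p ∣ q.1) :
    ∃ q₁ ∈ Lset N₀ M D, relQ M q q₁ ∧ ¬ p ∣ q₁.2.2 := by
  obtain ⟨hdisc, hMA, hcop⟩ := hq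
  by_cases hpc : p ∣ q.2.2
  swap
  · exact ⟨q, ⟨hdisc, hMA, hcop⟩, relQ_refl M q, hpc⟩
  have hpb := dvd_of_disc_eq hp hdisc hpD (hpc.mul_left _)
  have hdet : (!![1, N₀; 0, 1] : Matrix (Fin 2) (Fin 2) ℤ).det = 1 := by simp
  refine ⟨actQ !![1, N₀; 0, 1] q, ⟨?_, ?_, ?_⟩, ⟨_, hdet, by simp, rfl⟩, ?_⟩
  · rw [disc_actQ, hdet, hdisc, one_pow, one_mul]
  · rwa [actQ_upper]
  · rw [actQ_upper]
    rw [show q.1 * N₀^2 + q.2.1 * N₀ + q.2.2 = q.2.2 + (q.1 * N₀ + q.2.1) * N₀ by ring]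
    exact hcop.add_mul_right_right _
  · rw [actQ_upper]
    dsimp only
    intro h
    have hpAN₀ : p ∣ q.1 * N₀^2 :=
      (dvd_add_left (hpb.mul_right N₀)).1 ((dvd_add_left hpc).1 h)
    rcases hp.dvd_mul.1 hpAN₀ with h' | h'
    · exact hpA h'
    · exact hpN₀ (hp.dvd_of_dvd_pow h')

lemma exists_relQ_mem_Lset_mul {N₀ N D p : ℤ} {q : ℤ × ℤ × ℤ} (hq : q ∈ Lset N₀ N D)
    (hp : Prime p) (hp2 : ¬ p ∣ 2) (hpN : ¬ p ∣ N) (hpD : p ∣ D) (hpc : ¬ p ∣ q.2.2) :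
    ∃ q' ∈ Lset N₀ (N * p) D, relQ N q q' := by
  obtain ⟨hdisc, hNA, hcop⟩ := hq
  have hp2cN : ¬ p ∣ 2 * q.2.2 * N := by
    simp only [hp.dvd_mul, not_or]
    exact ⟨⟨hp2, hpc⟩, hpN⟩
  obtain ⟨u, v, huv⟩ := (hp.irreducible.coprime_iff_not_dvd.2 hp2cN).symm
  obtain ⟨k, hk⟩ : ∃ k, 2 * q.2.2 * k * N + q.2.1 = q.2.1 * v * p :=
    ⟨-q.2.1 * u, by linear_combination (-q.2.1) * huv⟩
  have hdet : (!![1, 0; k * N, 1] : Matrix (Fin 2) (Fin 2) ℤ).det = 1 := by simp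
  set q' := actQ !![1, 0; k * N, 1] q with hq'
  have hpA' : p ∣ q'.1 := by
    have h4c : 4 * q.2.2 * q'.1 = (q.2.1 * v * p)^2 - D := by
      rw [hq', actQ_lower, ← hdisc, ← hk]
      ring
    have hp4c : ¬ p ∣ 4 * q.2.2 := by
      rw [show (4 : ℤ) * q.2.2 = 2 * (2 * q.2.2) by ring]
      simp only [hp.dvd_mul, not_or]
      exact ⟨hp2, hp2, hpc⟩
    refine (hp.dvd_mul.1 ?_).resolve_left hp4c
    rw [h4c]
    exact dvd_sub (dvd_pow (dvd_mul_left p _) two_ne_zero) hpD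
  have hNA' : N ∣ q'.1 := by
    rw [hq', actQ_lower]
    exact dvd_add (dvd_add hNA (dvd_mul_of_dvd_right (dvd_mul_left N k) _))
      (dvd_mul_of_dvd_right (dvd_pow (dvd_mul_left N k) two_ne_zero) _)
  have hNp : IsCoprime N p := (hp.irreducible.coprime_iff_not_dvd.2 hpN).symm
  refine ⟨q', ⟨?_, hNp.mul_dvd hNA' hpA', ?_⟩, ⟨_, hdet, by simp, rfl⟩⟩
  · rw [hq', disc_actQ, hdet, hdisc, one_pow, one_mul]
  · rwa [hq', actQ_lower]

theorem stmt18_general (N N₀ Δ : ℤ) (p : ℕ) (hN₀ : N₀ ∣ N)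
    (hp : p.Prime) (hodd : Odd p) (hpN : ¬ (p : ℤ) ∣ N)
    (hpΔ : (p : ℤ) ∣ Δ) (hp2Δ : ¬ (p : ℤ)^2 ∣ Δ) :
    (∀ q ∈ Lset N₀ (N * (p : ℤ)) (N₀^2 * Δ), ∀ q' ∈ Lset N₀ (N * (p : ℤ)) (N₀^2 * Δ),
      (relQ N q q' ↔ relQ (N * (p : ℤ)) q q')) ∧
    (∀ q ∈ Lset N₀ N (N₀^2 * Δ), ∃ q' ∈ Lset N₀ (N * (p : ℤ)) (N₀^2 * Δ),
      relQ N q' q) := by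
  have hpz : Prime (p : ℤ) := Nat.prime_iff_prime_int.mp hp
  have hp2 : ¬ (p : ℤ) ∣ 2 := by
    intro h
    have hp_eq : p = 2 := (Nat.prime_dvd_prime_iff_eq hp Nat.prime_two).1 (by exact_mod_cast h)
    exact Nat.not_odd_iff_even.2 even_two (hp_eq ▸ hodd)
  have hpN₀ : ¬ (p : ℤ) ∣ N₀ := fun h => hpN (h.trans hN₀)
  have hpD : (p : ℤ) ∣ N₀^2 * Δ := hpΔ.mul_left _
  have hp2D : ¬ (p : ℤ)^2 ∣ N₀^2 * Δ := fun h =>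
    hp2Δ ((hpz.irreducible.coprime_iff_not_dvd.2 hpN₀).pow.dvd_of_dvd_mul_left h)
  refine ⟨fun q ⟨hdisc, hNpA, _⟩ q' ⟨_, hNpA', _⟩ =>
    ⟨fun h => ?_, relQ_of_dvd (dvd_mul_right N p)⟩, fun q hq => ?_⟩
  · exact relQ_mul_of_relQ hpz hpN hpD hp2D hdisc ((dvd_mul_left _ _).trans hNpA)
      ((dvd_mul_left _ _).trans hNpA') h
  by_cases hpA : (p : ℤ) ∣ q.1
  · have hNp : IsCoprime N p := (hpz.irreducible.coprime_iff_not_dvd.2 hpN).symm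
    exact ⟨q, ⟨hq.1, hNp.mul_dvd hq.2.1 hpA, hq.2.2⟩, relQ_refl N q⟩
  obtain ⟨q₁, hq₁, hqq₁, hpc⟩ := exists_relQ_not_dvd_thd hq hpz hpD hpN₀ hpA
  obtain ⟨q', hq', hq₁q'⟩ := exists_relQ_mem_Lset_mul hq₁ hpz hp2 hpN hpD hpc
  exact ⟨q', hq', relQ_symm (relQ_trans hqq₁ hq₁q')⟩

/-- When `p` exactly divides `Δ` (and `p ∤ N`, `N₀ ∣ N`), the identity map on
forms induces a bijection `L_{Np}(N₀²Δ)/Γ₀(Np) → L_N(N₀²Δ)/Γ₀(N)`: two forms of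
`L_{Np}(N₀²Δ)` are `Γ₀(N)`-equivalent iff they are `Γ₀(Np)`-equivalent
(injectivity), and every form of `L_N(N₀²Δ)` is `Γ₀(N)`-equivalent to one of
`L_{Np}(N₀²Δ)` (surjectivity). -/
theorem stmt18 (N N₀ Δ : ℤ) (p : ℕ) (hN : 1 ≤ N) (hN₀ : N₀ ∣ N)
    (hp : p.Prime) (hodd : Odd p) (hpN : ¬ (p : ℤ) ∣ N)
    (hpΔ : (p : ℤ) ∣ Δ) (hp2Δ : ¬ (p : ℤ)^2 ∣ Δ) :
    (∀ q ∈ Lset N₀ (N * (p : ℤ)) (N₀^2 * Δ), ∀ q' ∈ Lset N₀ (N * (p : ℤ)) (N₀^2 * Δ),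
      (relQ N q q' ↔ relQ (N * (p : ℤ)) q q')) ∧
    (∀ q ∈ Lset N₀ N (N₀^2 * Δ), ∃ q' ∈ Lset N₀ (N * (p : ℤ)) (N₀^2 * Δ),
      relQ N q' q) :=
  stmt18_general N N₀ Δ p hN₀ hp hodd hpN hpΔ hp2Δ
end
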